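/- Let K be a field of characteristic zero and let η ∈ K be nonzero and not a root of unity; set α = 1+η. For κ ∈ K define the sequence κ_{−1} = 0, κ_0 = κ, and κ_n = η⁻¹·(α·κ_{n−1} − κ_{n−2} + 1) for n ≥ 1. Then the set of κ ∈ K such that κ_n ≠ 0 for all n ≥ 0 is infinite. -/

import Mathlib

/-- The sequence `κ_{−1} = 0`, `κ_0 = k`, `κ_n = η⁻¹·(α·κ_{n−1} − κ_{n−2} + 1)` (indexed
from `0`, so `kapSeq η α k 1 = η⁻¹·(α·k − 0 + 1)`). -/
def kapSeq {K : Type*} [Field K] (η α : K) (k : K) : ℕ → K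
  | 0 => k
  | 1 => η⁻¹ * (α * k - 0 + 1)
  | n + 2 => η⁻¹ * (α * kapSeq η α k (n + 1) - kapSeq η α k n + 1)

/-! Writing `κ = (a + (η - 1)⁻¹) η⁻¹`, the recurrence solves to
`(η - 1) η^(n+1) κ_n = (a + n) η^(n+1) - (a - 1)`, so `κ_n = 0` iff `(a + n) η^(n+1) = a - 1`.
Take `a = i + 2` with `i ∈ ℕ`. As `η` is not a root of unity, each `n` kills at most one `i`.
If `(i₀, n₀)` is one bad pair, computing `η^((n+1)(n₀+1))` from it and from another bad pair
`(i, n)` gives `(i₀ + n₀ + 2)^(n+1) ≤ 2^(n₀+1) (i₀ + 1)^(n+1) (n + 1)^(n₀+1)`, which fails for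
large `n`: an exponential beats a polynomial. So only finitely many `i` are bad. -/

open Filter

theorem setOf_pow_le_mul_pow_mul_pow_finite {p q : ℕ} (hpq : p < q) (C c : ℕ) :
    {n : ℕ | q ^ n ≤ C * p ^ n * n ^ c}.Finite := by
  have hq : (0 : ℝ) < q := by exact_mod_cast (Nat.zero_le p).trans_lt hpq
  have hr : |(p : ℝ) / q| < 1 := by
    rw [abs_of_nonneg (by positivity), div_lt_one hq]
    exact_mod_cast hpq
  have hlim := (tendsto_pow_const_mul_const_pow_of_abs_lt_one c hr).const_mul (C : ℝ)
  rw [mul_zero] at hlim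
  have hev := hlim.eventually (gt_mem_nhds one_pos)
  rw [← Nat.cofinite_eq_atTop, eventually_cofinite] at hev
  refine hev.subset fun n hn => ?_
  have hn' : (q : ℝ) ^ n ≤ C * p ^ n * n ^ c := by exact_mod_cast hn
  have hrw : (C : ℝ) * (n ^ c * (p / q) ^ n) = C * p ^ n * n ^ c / q ^ n := by
    rw [div_pow]; ring
  simp only [Set.mem_ofPred_eq, not_lt, hrw]
  rwa [one_le_div (by positivity)]

theorem pow_mul_pow_eq_of_mul_pow_eq {M : Type*} [CommMonoid M] {x y x₀ y₀ η : M} {m m₀ : ℕ}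
    (h : x * η ^ m = y) (h₀ : x₀ * η ^ m₀ = y₀) : y ^ m₀ * x₀ ^ m = x ^ m₀ * y₀ ^ m := by
  rw [← h, ← h₀, mul_pow, mul_pow, ← pow_mul, ← pow_mul, mul_comm m m₀]
  ac_rfl

section

variable {K : Type*} [Field K] {η : K}

theorem sub_one_mul_pow_succ_mul_kapSeq (hη0 : η ≠ 0) (hη1 : η ≠ 1) (a : K) (n : ℕ) :
    (η - 1) * η ^ (n + 1) * kapSeq η (1 + η) ((a + (η - 1)⁻¹) * η⁻¹) n
      = (a + n) * η ^ (n + 1) - (a - 1) := by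
  have hη1' : η - 1 ≠ 0 := sub_ne_zero.mpr hη1
  set κ := kapSeq η (1 + η) ((a + (η - 1)⁻¹) * η⁻¹)
  induction n using Nat.twoStepInduction with
  | zero => simp only [κ, kapSeq]; field_simp; ring
  | one => simp only [κ, kapSeq]; field_simp; ring
  | more n ih₀ ih₁ =>
    have hrec : κ (n + 2) * η = (1 + η) * κ (n + 1) - κ n + 1 := by
      simp only [κ, kapSeq]; field_simp
    push_cast at ih₁ ⊢
    linear_combination (η - 1) * η ^ (n + 2) * hrec + (1 + η) * ih₁ - η * ih₀

theorem kapSeq_eq_zero_iff (hη0 : η ≠ 0) (hη1 : η ≠ 1) (a : K) (n : ℕ) :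
    kapSeq η (1 + η) ((a + (η - 1)⁻¹) * η⁻¹) n = 0 ↔ (a + n) * η ^ (n + 1) = a - 1 := by
  have hne : (η - 1) * η ^ (n + 1) ≠ 0 := mul_ne_zero (sub_ne_zero.mpr hη1) (pow_ne_zero _ hη0)
  rw [← mul_eq_zero_iff_left hne, sub_one_mul_pow_succ_mul_kapSeq hη0 hη1, sub_eq_zero]

theorem setOf_natCast_mul_pow_eq_finite [CharZero K] (hη : ∀ n : ℕ, 0 < n → η ^ n ≠ 1) :
    {p : ℕ × ℕ | ((p.1 + p.2 + 2 : ℕ) : K) * η ^ (p.2 + 1) = (p.1 + 1 : ℕ)}.Finite := by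
  set S := {p : ℕ × ℕ | ((p.1 + p.2 + 2 : ℕ) : K) * η ^ (p.2 + 1) = (p.1 + 1 : ℕ)}
  rcases S.eq_empty_or_nonempty with hS | ⟨⟨i₀, n₀⟩, h₀⟩
  · simp [hS]
  refine Set.Finite.of_finite_image (f := Prod.snd) ?_ ?_
  · have hF := (setOf_pow_le_mul_pow_mul_pow_finite (p := i₀ + 1) (q := i₀ + n₀ + 2)
      (by omega) (2 ^ (n₀ + 1)) (n₀ + 1)).preimage Nat.succ_injective.injOn
    refine hF.subset ?_
    rintro _ ⟨⟨i, n⟩, h, rfl⟩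
    have hpow : (i + 1) ^ (n₀ + 1) * (i₀ + n₀ + 2) ^ (n + 1)
        = (i + n + 2) ^ (n₀ + 1) * (i₀ + 1) ^ (n + 1) := by
      exact_mod_cast pow_mul_pow_eq_of_mul_pow_eq h h₀
    have hle : (i + n + 2) ^ (n₀ + 1)
        ≤ (i + 1) ^ (n₀ + 1) * (2 ^ (n₀ + 1) * (n + 1) ^ (n₀ + 1)) := by
      rw [← mul_pow, ← mul_pow]
      exact Nat.pow_le_pow_left (by nlinarith) _
    refine Nat.le_of_mul_le_mul_left ?_ (pow_pos (Nat.succ_pos i) (n₀ + 1))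
    calc (i + 1) ^ (n₀ + 1) * (i₀ + n₀ + 2) ^ (n + 1)
        = (i + n + 2) ^ (n₀ + 1) * (i₀ + 1) ^ (n + 1) := hpow
      _ ≤ (i + 1) ^ (n₀ + 1) * (2 ^ (n₀ + 1) * (n + 1) ^ (n₀ + 1)) * (i₀ + 1) ^ (n + 1) :=
        Nat.mul_le_mul_right _ hle
      _ = (i + 1) ^ (n₀ + 1) * (2 ^ (n₀ + 1) * (i₀ + 1) ^ (n + 1) * (n + 1) ^ (n₀ + 1)) := by
        ring
  · rintro ⟨i, n⟩ h ⟨i', n'⟩ h' (rfl : n = n')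
    have hdiff : ((i : K) - i') * (η ^ (n + 1) - 1) = 0 := by
      simp only [S, Set.mem_ofPred_eq] at h h'
      push_cast at h h'
      linear_combination h - h'
    rcases mul_eq_zero.mp hdiff with hi | hη1
    · rw [sub_eq_zero, Nat.cast_inj] at hi
      rw [hi]
    · exact absurd (sub_eq_zero.mp hη1) (hη _ n.succ_pos)

end

/-- Corollary 4.8: over a field of characteristic zero, if `η` is nonzero
and not a root of unity and `α = 1 + η`, then the set of `κ ∈ K` for which the sequence
`κ_n` (with `κ_{−1} = 0`, `κ_0 = κ`, `κ_n = η⁻¹(ακ_{n−1} − κ_{n−2} + 1)`) never vanishes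
is infinite.  (Equivalently, `A_η` has infinitely many pairwise non-isomorphic simple
lowest weight modules `W(κ)`.) -/
theorem infinitely_many_simple_lowest_weight {K : Type*} [Field K] [CharZero K]
    (η : K) (hη0 : η ≠ 0) (hη : ∀ n : ℕ, 0 < n → η ^ n ≠ 1) :
    {k : K | ∀ n : ℕ, kapSeq η (1 + η) k n ≠ 0}.Infinite := by
  have hη1 : η ≠ 1 := fun h => hη 1 one_pos (by rw [h, one_pow])
  set k : ℕ → K := fun i => (((i + 2 : ℕ) : K) + (η - 1)⁻¹) * η⁻¹
  have hk : k.Injective := fun i j hij => by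
    simpa using mul_right_cancel₀ (inv_ne_zero hη0) hij
  have hbad := (setOf_natCast_mul_pow_eq_finite hη).image Prod.fst
  refine (hbad.infinite_compl.image hk.injOn).mono ?_
  rintro _ ⟨i, hi, rfl⟩ n hn
  rw [kapSeq_eq_zero_iff hη0 hη1] at hn
  refine hi ⟨(i, n), ?_, rfl⟩
  simp only [Set.mem_ofPred_eq]
  push_cast at hn ⊢
  linear_combination hn
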